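/- Let G be a finite 2-group of exponent 4 in which every involution is central. Then for every symmetric subset S ⊆ G with 1 ∉ S and |S| ≤ 3, the subgroup generated by S is abelian, and consequently the Cayley graph Cay(G,S) is integral. -/

import Mathlib

/-- The Cayley graph of a group `G` with connection set `S`. For a symmetric set `S`
with `1 ∉ S`, `g` and `h` are adjacent iff `h * g⁻¹ ∈ S`. -/
def cayley {G : Type*} [Group G] (S : Set G) : SimpleGraph G :=
  SimpleGraph.fromRel (fun g h => h * g⁻¹ ∈ S)

/-- A finite graph is integral if all eigenvalues of its adjacency matrix are integers. -/
def IsIntegralGraph {V : Type*} [Finite V] (Γ : SimpleGraph V) : Prop :=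
  letI := Fintype.ofFinite V
  letI := Classical.decEq V
  letI : DecidableRel Γ.Adj := Classical.decRel _
  ∀ μ ∈ spectrum ℝ (Γ.adjMatrix ℝ), ∃ z : ℤ, (z : ℝ) = μ

/-- `μ` is an eigenvalue of the adjacency matrix of the finite graph `Γ`. -/
def IsAdjEigenvalue {V : Type*} [Finite V] (Γ : SimpleGraph V) (μ : ℝ) : Prop :=
  letI := Fintype.ofFinite V
  letI := Classical.decEq V
  letI : DecidableRel Γ.Adj := Classical.decRel _
  μ ∈ spectrum ℝ (Γ.adjMatrix ℝ)

/-!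
A symmetric set of at most three elements contains at most one pair `{a, a⁻¹}` with `a² ≠ 1`;
all its other elements are involutions, hence central. So any two elements of `S` commute, and
`⟨S⟩` is abelian.

The adjacency matrix of `Cay(G, S)` is `A = ∑ s ∈ S, ρ s` for the left regular representation
`ρ`. The summands commute, `ρ t ^ 2 = 1` for involutions, and `ρ a⁻¹ = ρ a ^ 3` with
`ρ a ^ 4 = 1` otherwise. According to the shape of `S`, `A` is `C` or `B + C` with `B` an
involution commuting with `C`, and `C` equal to `0`, to a sum of two commuting involutions, or to
`ρ a + ρ a ^ 3`. In each case `C³ = 4C`, which forces `((B + C)² - 1)((B + C)² - 9) = 0`; so every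
eigenvalue of `A` lies in `{0, ±1, ±2, ±3}`.
-/

open Polynomial

section RingIdentities

universe u

variable {R : Type u} [Ring R] {B C : R}

open scoped IsMulCommutative in
/-- Commuting elements lie in a commutative subring, so identities between them can be checked
by `linear_combination`. -/
theorem Commute.exists_injective_ringHom (h : Commute B C) :
    ∃ (T : Type u) (_ : CommRing T) (f : T →+* R) (B' C' : T),
      Function.Injective f ∧ f B' = B ∧ f C' = C :=
  have := Subring.isMulCommutative_closure (s := {B, C}) (by
    rintro x (rfl | rfl) y (rfl | rfl) <;> first | rfl | exact h.eq | exact h.symm.eq)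
  ⟨_, inferInstance, (Subring.closure {B, C}).subtype, ⟨B, Subring.subset_closure (by simp)⟩,
    ⟨C, Subring.subset_closure (by simp)⟩, Subtype.val_injective, rfl, rfl⟩

theorem Commute.add_pow_three_of_sq_eq_one (h : Commute B C) (hB : B ^ 2 = 1) (hC : C ^ 2 = 1) :
    (B + C) ^ 3 = 4 * (B + C) := by
  obtain ⟨T, _, f, B, C, hf, rfl, rfl⟩ := h.exists_injective_ringHom
  have hB : B ^ 2 = 1 := hf (by simpa using hB)
  have hC : C ^ 2 = 1 := hf (by simpa [map_ofNat] using hC)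
  simpa [map_ofNat] using congrArg f
    (by linear_combination (B + 3 * C) * hB + (3 * B + C) * hC : (B + C) ^ 3 = 4 * (B + C))

theorem add_pow_three_of_pow_four_eq_one {P : R} (hP : P ^ 4 = 1) :
    (P + P ^ 3) ^ 3 = 4 * (P + P ^ 3) := by
  obtain ⟨T, _, f, P, -, hf, rfl, -⟩ := (Commute.refl P).exists_injective_ringHom
  have hP : P ^ 4 = 1 := hf (by simpa using hP)
  simpa [map_ofNat] using congrArg f (by linear_combination (4 * P + 3 * P ^ 3 + P ^ 5) * hP :
    (P + P ^ 3) ^ 3 = 4 * (P + P ^ 3))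

theorem Commute.add_sq_sub_one_mul_add_sq_sub_nine (h : Commute B C) (hB : B ^ 2 = 1)
    (hC : C ^ 3 = 4 * C) : ((B + C) ^ 2 - 1) * ((B + C) ^ 2 - 9) = 0 := by
  obtain ⟨T, _, f, B, C, hf, rfl, rfl⟩ := h.exists_injective_ringHom
  have hB : B ^ 2 = 1 := hf (by simpa using hB)
  have hC : C ^ 3 = 4 * C := hf (by simpa [map_ofNat] using hC)
  simpa [map_ofNat] using congrArg f (by
    linear_combination (B ^ 2 + 4 * B * C + 6 * C ^ 2 - 9) * hB + (4 * B + C) * hC :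
    ((B + C) ^ 2 - 1) * ((B + C) ^ 2 - 9) = 0)

end RingIdentities

theorem exists_int_eq_of_mem_spectrum {A : Type*} [Ring A] [Algebra ℝ A] [Nontrivial A] {a : A}
    (ha : a ^ 3 = 4 * a ∨ (a ^ 2 - 1) * (a ^ 2 - 9) = 0) {μ : ℝ} (hμ : μ ∈ spectrum ℝ a) :
    ∃ z : ℤ, (z : ℝ) = μ := by
  set p : ℝ[X] := (X ^ 3 - 4 * X) * ((X ^ 2 - 1) * (X ^ 2 - 9))
  have hp : aeval a p = 0 := by
    rcases ha with h | h <;> simp [p, map_ofNat, h]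
  have hμp := spectrum.subset_polynomial_aeval a p ⟨μ, hμ, rfl⟩
  rw [hp, spectrum.zero_eq, Set.mem_singleton_iff] at hμp
  have hroots : μ * (μ - 2) * (μ + 2) * ((μ - 1) * (μ + 1) * ((μ - 3) * (μ + 3))) = 0 := by
    simp only [p, eval_mul, eval_sub, eval_pow, eval_X, eval_ofNat, eval_one] at hμp
    linear_combination hμp
  simp only [mul_eq_zero, sub_eq_zero, add_eq_zero_iff_eq_neg] at hroots
  rcases hroots with ((h | h) | h) | ((h | h) | (h | h))
  exacts [⟨0, by simp [h]⟩, ⟨2, by simp [h]⟩, ⟨-2, by simp [h]⟩, ⟨1, by simp [h]⟩,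
    ⟨-1, by simp [h]⟩, ⟨3, by simp [h]⟩, ⟨-3, by simp [h]⟩]

theorem isIntegralGraph_iff {V : Type*} [Fintype V] [DecidableEq V] (Γ : SimpleGraph V)
    [DecidableRel Γ.Adj] :
    IsIntegralGraph Γ ↔ ∀ μ ∈ spectrum ℝ (Γ.adjMatrix ℝ), ∃ z : ℤ, (z : ℝ) = μ := by
  unfold IsIntegralGraph
  convert Iff.rfl

section SymmetricSets

variable {G : Type*} [Group G]

theorem ne_inv_of_sq_ne_one {a : G} (ha : a ^ 2 ≠ 1) : a ≠ a⁻¹ :=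
  fun h => ha (by rw [sq, mul_eq_one_iff_eq_inv]; exact h)

theorem mem_center_of_sq_eq_one (hcent : ∀ t : G, orderOf t = 2 → t ∈ Subgroup.center G)
    {a : G} (ha : a ^ 2 = 1) : a ∈ Subgroup.center G := by
  rcases eq_or_ne a 1 with rfl | h1
  · exact one_mem _
  · exact hcent a (orderOf_eq_prime ha h1)

variable [DecidableEq G] {S : Finset G} (hsym : ∀ s ∈ S, s⁻¹ ∈ S) (hcard : S.card ≤ 3)
include hsym hcard

theorem sq_eq_one_or_sq_eq_one_of_card_le_three {a b : G} (ha : a ∈ S) (hb : b ∈ S)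
    (hba : b ≠ a) (hba' : b ≠ a⁻¹) : a ^ 2 = 1 ∨ b ^ 2 = 1 := by
  by_contra! h
  have hdisj : Disjoint ({a, a⁻¹} : Finset G) {b, b⁻¹} := by
    have hb' : b⁻¹ ≠ a := fun h => hba' (by rw [← h, inv_inv])
    simp [hba, hba', hb']
  have hsub : {a, a⁻¹} ∪ {b, b⁻¹} ⊆ S := by
    simp [Finset.insert_subset_iff, ha, hb, hsym a ha, hsym b hb]
  have := Finset.card_le_card hsub
  rw [Finset.card_union_of_disjoint hdisj, Finset.card_pair (ne_inv_of_sq_ne_one h.1),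
    Finset.card_pair (ne_inv_of_sq_ne_one h.2)] at this
  omega

theorem eq_pair_or_eq_insert_pair {a : G} (ha : a ∈ S) (ha2 : a ^ 2 ≠ 1) :
    S = {a, a⁻¹} ∨ ∃ t, t ^ 2 = 1 ∧ t ∉ ({a, a⁻¹} : Finset G) ∧ S = insert t {a, a⁻¹} := by
  have hsub : {a, a⁻¹} ⊆ S := by simp [Finset.insert_subset_iff, ha, hsym a ha]
  rcases (S \ {a, a⁻¹}).eq_empty_or_nonempty with h | ⟨t, ht⟩
  · exact .inl ((Finset.sdiff_eq_empty_iff_subset.mp h).antisymm hsub)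
  rw [Finset.mem_sdiff] at ht
  have ht2 : t ^ 2 = 1 := by
    refine (sq_eq_one_or_sq_eq_one_of_card_le_three hsym hcard ha ht.1 ?_ ?_).resolve_left ha2
    all_goals simp_all
  refine .inr ⟨t, ht2, ht.2,
    (Finset.eq_of_subset_of_card_le (Finset.insert_subset ht.1 hsub) ?_).symm⟩
  rw [Finset.card_insert_of_notMem ht.2, Finset.card_pair (ne_inv_of_sq_ne_one ha2)]
  omega

theorem commute_of_mem_of_card_le_three
    (hcent : ∀ t : G, orderOf t = 2 → t ∈ Subgroup.center G) {a b : G} (ha : a ∈ S)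
    (hb : b ∈ S) : Commute a b := by
  by_cases hba : b = a
  · rw [hba]
  by_cases hba' : b = a⁻¹
  · rw [hba']
    exact (Commute.refl a).inv_right
  rcases sq_eq_one_or_sq_eq_one_of_card_le_three hsym hcard ha hb hba hba' with h | h
  · exact (Subgroup.mem_center_iff.mp (mem_center_of_sq_eq_one hcent h) b).symm
  · exact Subgroup.mem_center_iff.mp (mem_center_of_sq_eq_one hcent h) a

end SymmetricSets

section SumOfTranslations

variable {G R : Type*} [Group G] [DecidableEq G] [Ring R] (ρ : G →* R) {S : Finset G}

theorem sum_pow_three_or_of_forall_sq_eq_one (hcomm : ∀ a ∈ S, ∀ b ∈ S, Commute a b)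
    (hcard : S.card ≤ 3) (hS : ∀ s ∈ S, s ^ 2 = 1) :
    (∑ s ∈ S, ρ s) ^ 3 = 4 * ∑ s ∈ S, ρ s ∨
      ((∑ s ∈ S, ρ s) ^ 2 - 1) * ((∑ s ∈ S, ρ s) ^ 2 - 9) = 0 := by
  have hρ : ∀ s ∈ S, ρ s ^ 2 = 1 := fun s hs => by rw [← map_pow, hS s hs, map_one]
  have hρcomm : ∀ a ∈ S, ∀ b ∈ S, Commute (ρ a) (ρ b) :=
    fun a ha b hb => (hcomm a ha b hb).map ρ
  interval_cases h : S.card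
  · simp [Finset.card_eq_zero.mp h]
  · obtain ⟨t, rfl⟩ := Finset.card_eq_one.mp h
    right
    simpa using (Commute.zero_right (ρ t)).add_sq_sub_one_mul_add_sq_sub_nine (hρ t (by simp))
      (by simp)
  · obtain ⟨t, u, htu, rfl⟩ := Finset.card_eq_two.mp h
    left
    rw [Finset.sum_pair htu]
    exact (hρcomm t (by simp) u (by simp)).add_pow_three_of_sq_eq_one
      (hρ t (by simp)) (hρ u (by simp))
  · obtain ⟨t, u, w, htu, htw, huw, rfl⟩ := Finset.card_eq_three.mp h
    right
    rw [Finset.sum_insert (by simp [htu, htw]), Finset.sum_pair huw]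
    refine ((hρcomm t (by simp) u (by simp)).add_right (hρcomm t (by simp) w (by simp))
      ).add_sq_sub_one_mul_add_sq_sub_nine (hρ t (by simp)) ?_
    exact (hρcomm u (by simp) w (by simp)).add_pow_three_of_sq_eq_one
      (hρ u (by simp)) (hρ w (by simp))

theorem sum_pow_three_or_of_sq_ne_one (hsym : ∀ s ∈ S, s⁻¹ ∈ S) (hcard : S.card ≤ 3)
    (hcomm : ∀ a ∈ S, ∀ b ∈ S, Commute a b) {a : G} (ha : a ∈ S) (ha2 : a ^ 2 ≠ 1)
    (ha4 : a ^ 4 = 1) :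
    (∑ s ∈ S, ρ s) ^ 3 = 4 * ∑ s ∈ S, ρ s ∨
      ((∑ s ∈ S, ρ s) ^ 2 - 1) * ((∑ s ∈ S, ρ s) ^ 2 - 9) = 0 := by
  have hinv : ρ a⁻¹ = ρ a ^ 3 := by
    rw [inv_eq_of_mul_eq_one_right (by rw [← pow_succ', ha4]), map_pow]
  have hpair : (ρ a + ρ a ^ 3) ^ 3 = 4 * (ρ a + ρ a ^ 3) :=
    add_pow_three_of_pow_four_eq_one (by rw [← map_pow, ha4, map_one])
  have hne := ne_inv_of_sq_ne_one ha2
  rcases eq_pair_or_eq_insert_pair hsym hcard ha ha2 with rfl | ⟨t, ht2, hta, rfl⟩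
  · left
    rwa [Finset.sum_pair hne, hinv]
  · right
    rw [Finset.sum_insert hta, Finset.sum_pair hne, hinv]
    have htS : t ∈ insert t {a, a⁻¹} := Finset.mem_insert_self t _
    have hta' := (hcomm t htS a ha).map ρ
    exact (hta'.add_right (hta'.pow_right 3)).add_sq_sub_one_mul_add_sq_sub_nine
      (by rw [← map_pow, ht2, map_one]) hpair

theorem sum_pow_three_or (hsym : ∀ s ∈ S, s⁻¹ ∈ S) (hcard : S.card ≤ 3)
    (hcomm : ∀ a ∈ S, ∀ b ∈ S, Commute a b) (h4 : ∀ s ∈ S, s ^ 4 = 1) :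
    (∑ s ∈ S, ρ s) ^ 3 = 4 * ∑ s ∈ S, ρ s ∨
      ((∑ s ∈ S, ρ s) ^ 2 - 1) * ((∑ s ∈ S, ρ s) ^ 2 - 9) = 0 := by
  by_cases hS : ∃ a ∈ S, a ^ 2 ≠ 1
  · obtain ⟨a, ha, ha2⟩ := hS
    exact sum_pow_three_or_of_sq_ne_one ρ hsym hcard hcomm ha ha2 (h4 a ha)
  · exact sum_pow_three_or_of_forall_sq_eq_one ρ hcomm hcard
      fun s hs => not_not.mp fun h => hS ⟨s, hs, h⟩

end SumOfTranslations

section CayleyGraph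

variable {G : Type*} [Group G]

theorem cayley_adj_iff {S : Set G} (h1 : (1 : G) ∉ S) (hsym : ∀ s ∈ S, s⁻¹ ∈ S) {g h : G} :
    (cayley S).Adj g h ↔ g * h⁻¹ ∈ S := by
  have hswap : h * g⁻¹ ∈ S ↔ g * h⁻¹ ∈ S :=
    ⟨fun hs => by simpa using hsym _ hs, fun hs => by simpa using hsym _ hs⟩
  rw [cayley, SimpleGraph.fromRel_adj, hswap, or_self]
  exact and_iff_right_of_imp fun hs hgh => h1 (by simpa [hgh] using hs)

variable [Fintype G] [DecidableEq G]

def leftRegularMatrix (R : Type*) [NonAssocSemiring R] : G →* Matrix G G R :=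
  Matrix.permMatrixHom.comp (MulAction.toPermHom G G)

theorem leftRegularMatrix_apply (R : Type*) [NonAssocSemiring R] (x g h : G) :
    leftRegularMatrix R x g h = if g * h⁻¹ = x then 1 else 0 := by
  simp [leftRegularMatrix, PEquiv.toMatrix_apply, inv_mul_eq_iff_eq_mul, mul_inv_eq_iff_eq_mul]

theorem adjMatrix_cayley (R : Type*) [NonAssocSemiring R] {S : Finset G} (h1 : (1 : G) ∉ S)
    (hsym : ∀ s ∈ S, s⁻¹ ∈ S) [DecidableRel (cayley (S : Set G)).Adj] :
    (cayley (S : Set G)).adjMatrix R = ∑ s ∈ S, leftRegularMatrix R s := by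
  ext g h
  simp [SimpleGraph.adjMatrix_apply, cayley_adj_iff (S := (S : Set G)) h1 hsym, Matrix.sum_apply,
    leftRegularMatrix_apply]

end CayleyGraph

theorem small_sets_generate_abelian_general (G : Type*) [Group G] [Finite G]
    (hexp : Monoid.exponent G = 4)
    (hcent : ∀ t : G, orderOf t = 2 → t ∈ Subgroup.center G) :
    ∀ S : Finset G, (1 : G) ∉ S → (∀ s ∈ S, s⁻¹ ∈ S) → S.card ≤ 3 →
      (∀ x ∈ Subgroup.closure (S : Set G), ∀ y ∈ Subgroup.closure (S : Set G),
        x * y = y * x) ∧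
      IsIntegralGraph (cayley (S : Set G)) := by
  intro S h1 hsym hcard
  classical
  have hcomm : ∀ a ∈ S, ∀ b ∈ S, Commute a b := fun a ha b hb =>
    commute_of_mem_of_card_le_three hsym hcard hcent ha hb
  refine ⟨fun x hx y hy => Set.centralizer_centralizer_comm_of_comm hcomm x
    (Subgroup.closure_le_centralizer_centralizer _ hx) y
    (Subgroup.closure_le_centralizer_centralizer _ hy), ?_⟩
  have := Fintype.ofFinite G
  rw [isIntegralGraph_iff, adjMatrix_cayley ℝ h1 hsym]
  exact fun μ => exists_int_eq_of_mem_spectrum <|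
    sum_pow_three_or _ hsym hcard hcomm fun s _ => hexp ▸ Monoid.pow_exponent_eq_one s

theorem small_sets_generate_abelian (G : Type*) [Group G] [Finite G]
    (hp : IsPGroup 2 G) (hexp : Monoid.exponent G = 4)
    (hcent : ∀ t : G, orderOf t = 2 → t ∈ Subgroup.center G) :
    ∀ S : Finset G, (1 : G) ∉ S → (∀ s ∈ S, s⁻¹ ∈ S) → S.card ≤ 3 →
      (∀ x ∈ Subgroup.closure (S : Set G), ∀ y ∈ Subgroup.closure (S : Set G),
        x * y = y * x) ∧
      IsIntegralGraph (cayley (S : Set G)) :=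
  small_sets_generate_abelian_general G hexp hcent
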